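/- Let p : {-1,1}^n → ℝ be (the restriction of) a multilinear polynomial with p(x) ≠ 0 for all x ∈ {-1,1}^n, and let f = sgn ∘ p. Then I[f] ≤ √( n + Σ_{i ≠ j} E_x[ x_i x_j · sgn(D_i p(x)) · sgn(D_j p(x)) ] ), where x is uniform on {-1,1}^n, D_i p(x) = (p(x^{i→1}) − p(x^{i→−1}))/2, and sgn(0) = 0. -/
import Mathlib


open Finset
open scoped Classical

noncomputable section

/-- The Boolean cube `{-1,1}^V` as a finset of functions `V → ℤ`. -/
def cube (V : Type*) [Fintype V] [DecidableEq V] : Finset (V → ℤ) :=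
  Fintype.piFinset fun _ => ({-1, 1} : Finset ℤ)

/-- Negate the `i`-th coordinate. -/
def flipAt {V : Type*} [DecidableEq V] (x : V → ℤ) (i : V) : V → ℤ :=
  Function.update x i (-(x i))

/-- Influence of coordinate `i` on `f`: the probability over a uniform point of the cube
that flipping coordinate `i` changes the value of `f`. -/
def coordInf {V : Type*} [Fintype V] [DecidableEq V] {α : Type*} (f : (V → ℤ) → α) (i : V) : ℝ :=
  (∑ x ∈ cube V, if f x ≠ f (flipAt x i) then (1 : ℝ) else 0) / (cube V).card

/-- Total influence of `f`. -/
def totalInf {V : Type*} [Fintype V] [DecidableEq V] {α : Type*} (f : (V → ℤ) → α) : ℝ :=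
  ∑ i : V, coordInf f i

/-- Sign function, with `sgn 0 = 0`. -/
def sgn (t : ℝ) : ℤ := if 0 < t then 1 else if t < 0 then -1 else 0

/-- A quadratic multilinear polynomial `∑_{i<j} a_{ij} x_i x_j + ∑_i b_i x_i + c`. -/
def quadPoly {V : Type*} [Fintype V] [LinearOrder V] (a : V → V → ℝ) (b : V → ℝ) (c : ℝ)
    (x : V → ℤ) : ℝ :=
  (∑ i : V, ∑ j : V, if i < j then a i j * x i * x j else 0) + (∑ i : V, b i * x i) + c

/-- `f` is a QTF supported on the graph `G`: it has a quadratic representation whose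
cross terms only involve edges of `G`, and whose polynomial is nonvanishing on the cube. -/
def IsQTFSupportedOn {V : Type*} [Fintype V] [LinearOrder V] (G : SimpleGraph V)
    (f : (V → ℤ) → ℤ) : Prop :=
  ∃ a b c, (∀ i j : V, i < j → a i j ≠ 0 → G.Adj i j) ∧
    (∀ x ∈ cube V, quadPoly a b c x ≠ 0) ∧
    (∀ x ∈ cube V, f x = sgn (quadPoly a b c x))

/-- The multilinear polynomial with coefficients `c`, evaluated on the cube:
`p(x) = Σ_S c_S · Π_{i ∈ S} x_i`. -/
def multilinear {n : ℕ} (c : Finset (Fin n) → ℝ) (x : Fin n → ℤ) : ℝ :=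
  ∑ S : Finset (Fin n), c S * ∏ i ∈ S, (x i : ℝ)

/-- The discrete derivative `D_i g(x) = (g(x^{i→1}) - g(x^{i→-1}))/2`. -/
def dDeriv {n : ℕ} (g : (Fin n → ℤ) → ℝ) (i : Fin n) (x : Fin n → ℤ) : ℝ :=
  (g (Function.update x i 1) - g (Function.update x i (-1))) / 2

lemma mem_cube_iff {V : Type*} [Fintype V] [DecidableEq V] {x : V → ℤ} :
    x ∈ cube V ↔ ∀ i, x i = -1 ∨ x i = 1 := by
  simp [cube, Fintype.mem_piFinset]
lemma update_mem_cube {V : Type*} [Fintype V] [DecidableEq V] {x : V → ℤ}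
    (hx : x ∈ cube V) (i : V) {a : ℤ} (ha : a = -1 ∨ a = 1) :
    Function.update x i a ∈ cube V := by
  rw [mem_cube_iff] at hx ⊢
  intro j
  rcases eq_or_ne j i with h | h
  · subst h; simpa using ha
  · simpa [Function.update_of_ne h] using hx j
lemma flipAt_mem_cube {V : Type*} [Fintype V] [DecidableEq V] {x : V → ℤ}
    (hx : x ∈ cube V) (i : V) : flipAt x i ∈ cube V := by
  apply update_mem_cube hx
  rcases mem_cube_iff.1 hx i with h | h <;> simp [h]
lemma flipAt_flipAt {V : Type*} [DecidableEq V] (x : V → ℤ) (i : V) :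
    flipAt (flipAt x i) i = x := by
  simp [flipAt, Function.update_idem]
lemma update_flipAt {V : Type*} [DecidableEq V] (x : V → ℤ) (i : V) (a : ℤ) :
    Function.update (flipAt x i) i a = Function.update x i a := by
  simp [flipAt, Function.update_idem]
lemma dDeriv_flipAt {n : ℕ} (g : (Fin n → ℤ) → ℝ) (i : Fin n) (x : Fin n → ℤ) :
    dDeriv g i (flipAt x i) = dDeriv g i x := by
  simp [dDeriv, update_flipAt]
lemma sgn_cases {t : ℝ} (h : t ≠ 0) : (sgn t = 1 ∧ 0 < t) ∨ (sgn t = -1 ∧ t < 0) := by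
  rcases lt_trichotomy t 0 with h1 | h1 | h1
  · right; exact ⟨by simp [sgn, h1, not_lt_of_gt h1], h1⟩
  · exact absurd h1 h
  · left; exact ⟨by simp [sgn, h1], h1⟩
lemma sgn_sq_le_one (t : ℝ) : ((sgn t : ℝ)) ^ 2 ≤ 1 := by
  unfold sgn; split_ifs <;> norm_num

-- key pointwise lemma
lemma key_sgn {n : ℕ} (p : (Fin n → ℤ) → ℝ) (i : Fin n) (x : Fin n → ℤ)
    (hp1 : p (Function.update x i 1) ≠ 0) (hp2 : p (Function.update x i (-1)) ≠ 0) :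
    2 * (if sgn (p (Function.update x i 1)) ≠ sgn (p (Function.update x i (-1))) then (1:ℝ) else 0)
      = ((sgn (p (Function.update x i 1)) : ℝ) - (sgn (p (Function.update x i (-1))) : ℝ))
          * (sgn (dDeriv p i x) : ℝ) := by
  set a := p (Function.update x i 1) with ha
  set b := p (Function.update x i (-1)) with hb
  have hD : dDeriv p i x = (a - b) / 2 := rfl
  rcases sgn_cases hp1 with ⟨h1, h1'⟩ | ⟨h1, h1'⟩ <;>
    rcases sgn_cases hp2 with ⟨h2, h2'⟩ | ⟨h2, h2'⟩
  · simp [h1, h2]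
  · have hd : 0 < dDeriv p i x := by rw [hD]; linarith
    have : sgn (dDeriv p i x) = 1 := (sgn_cases (ne_of_gt hd)).resolve_right
      (fun h => absurd h.2 (not_lt_of_gt hd)) |>.1
    rw [h1, h2, this]; norm_num
  · have hd : dDeriv p i x < 0 := by rw [hD]; linarith
    have : sgn (dDeriv p i x) = -1 := (sgn_cases (ne_of_lt hd)).resolve_left
      (fun h => absurd h.2 (not_lt_of_gt hd)) |>.1
    rw [h1, h2, this]; norm_num
  · simp [h1, h2]

lemma pair_eq {n : ℕ} (p : (Fin n → ℤ) → ℝ)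
    (hp : ∀ x ∈ cube (Fin n), p x ≠ 0)
    (f : (Fin n → ℤ) → ℤ) (hf : ∀ x ∈ cube (Fin n), f x = sgn (p x))
    (i : Fin n) (x : Fin n → ℤ) (hx : x ∈ cube (Fin n)) :
    (if f x ≠ f (flipAt x i) then (1:ℝ) else 0)
      + (if f (flipAt x i) ≠ f (flipAt (flipAt x i) i) then (1:ℝ) else 0)
    = (f x : ℝ) * (x i : ℝ) * (sgn (dDeriv p i x) : ℝ)
      + (f (flipAt x i) : ℝ) * ((flipAt x i) i : ℝ) * (sgn (dDeriv p i (flipAt x i)) : ℝ) := by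
  have hy : flipAt x i ∈ cube (Fin n) := flipAt_mem_cube hx i
  rw [flipAt_flipAt, dDeriv_flipAt]
  have hyi : (flipAt x i) i = -(x i) := by simp [flipAt]
  rw [hyi, hf x hx, hf _ hy]
  rcases mem_cube_iff.1 hx i with h | h
  · -- x i = -1 : x = update x i (-1), flipAt x i = update x i 1
    have e1 : Function.update x i (-1) = x := by rw [← h]; exact Function.update_eq_self i x
    have e2 : flipAt x i = Function.update x i 1 := by simp [flipAt, h]
    have := key_sgn p i x (by rw [← e2]; exact hp _ hy) (by rw [e1]; exact hp _ hx)
    rw [← e2, e1] at this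
    have hif : (if sgn (p x) ≠ sgn (p (flipAt x i)) then (1:ℝ) else 0)
        = (if sgn (p (flipAt x i)) ≠ sgn (p x) then (1:ℝ) else 0) := if_congr ne_comm rfl rfl
    rw [hif, h]
    push_cast
    linear_combination this
  · -- x i = 1
    have e1 : Function.update x i 1 = x := by rw [← h]; exact Function.update_eq_self i x
    have e2 : flipAt x i = Function.update x i (-1) := by simp [flipAt, h]
    have := key_sgn p i x (by rw [e1]; exact hp _ hx) (by rw [← e2]; exact hp _ hy)
    rw [e1, ← e2] at this
    have hif : (if sgn (p (flipAt x i)) ≠ sgn (p x) then (1:ℝ) else 0)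
        = (if sgn (p x) ≠ sgn (p (flipAt x i)) then (1:ℝ) else 0) := if_congr ne_comm rfl rfl
    rw [hif, h]
    push_cast
    linear_combination this

lemma coordInf_eq {n : ℕ} (p : (Fin n → ℤ) → ℝ)
    (hp : ∀ x ∈ cube (Fin n), p x ≠ 0)
    (f : (Fin n → ℤ) → ℤ) (hf : ∀ x ∈ cube (Fin n), f x = sgn (p x)) (i : Fin n) :
    coordInf f i =
      (∑ x ∈ cube (Fin n), (f x : ℝ) * (x i : ℝ) * (sgn (dDeriv p i x) : ℝ))
        / (cube (Fin n)).card := by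
  unfold coordInf
  congr 1
  set ind : (Fin n → ℤ) → ℝ := fun x => if f x ≠ f (flipAt x i) then (1:ℝ) else 0 with hind
  set g : (Fin n → ℤ) → ℝ := fun x => (f x : ℝ) * (x i : ℝ) * (sgn (dDeriv p i x) : ℝ) with hg
  have hreA : ∑ x ∈ cube (Fin n), ind x = ∑ x ∈ cube (Fin n), ind (flipAt x i) :=
    Finset.sum_nbij' (fun x => flipAt x i) (fun x => flipAt x i)
      (fun x hx => flipAt_mem_cube hx i) (fun x hx => flipAt_mem_cube hx i)
      (fun x _ => flipAt_flipAt x i) (fun x _ => flipAt_flipAt x i)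
      (fun x hx => by simp only [hind, flipAt_flipAt])
  have hreB : ∑ x ∈ cube (Fin n), g x = ∑ x ∈ cube (Fin n), g (flipAt x i) :=
    Finset.sum_nbij' (fun x => flipAt x i) (fun x => flipAt x i)
      (fun x hx => flipAt_mem_cube hx i) (fun x hx => flipAt_mem_cube hx i)
      (fun x _ => flipAt_flipAt x i) (fun x _ => flipAt_flipAt x i)
      (fun x hx => by rw [flipAt_flipAt])
  have hpair : ∑ x ∈ cube (Fin n), (ind x + ind (flipAt x i))
      = ∑ x ∈ cube (Fin n), (g x + g (flipAt x i)) :=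
    Finset.sum_congr rfl (fun x hx => pair_eq p hp f hf i x hx)
  rw [Finset.sum_add_distrib, Finset.sum_add_distrib, ← hreA, ← hreB] at hpair
  have key : ∑ x ∈ cube (Fin n), ind x = ∑ x ∈ cube (Fin n), g x := by linarith
  rw [← key]
  exact Finset.sum_congr rfl fun x _ => by
    by_cases h : f x ≠ f (flipAt x i)
    · simp [hind, h]
    · simp [hind, h, not_not.mp h]

/-- For a multilinear polynomial `p` nonvanishing on the cube and `f = sgn ∘ p`,
`I[f] ≤ √( n + Σ_{i ≠ j} E_x[ x_i x_j · sgn(D_i p(x)) · sgn(D_j p(x)) ] )`. -/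
theorem influence_le_sqrt_cross_terms {n : ℕ} (c : Finset (Fin n) → ℝ)
    (hnz : ∀ x ∈ cube (Fin n), multilinear c x ≠ 0)
    (f : (Fin n → ℤ) → ℤ)
    (hf : ∀ x ∈ cube (Fin n), f x = sgn (multilinear c x)) :
    totalInf f ≤
      Real.sqrt ((n : ℝ) +
        ∑ i : Fin n, ∑ j : Fin n,
          if i ≠ j then
            (∑ x ∈ cube (Fin n),
              (x i : ℝ) * (x j : ℝ) * (sgn (dDeriv (multilinear c) i x) : ℝ) *
                (sgn (dDeriv (multilinear c) j x) : ℝ)) / (cube (Fin n)).card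
          else 0) := by
  set p := multilinear c with hpdef
  set S := cube (Fin n) with hSdef
  have hone : (fun _ => (1:ℤ)) ∈ S := mem_cube_iff.2 fun i => Or.inr rfl
  have hNpos : 0 < ((S.card : ℝ)) := by
    exact_mod_cast Finset.card_pos.2 ⟨_, hone⟩
  set N := ((S.card : ℝ)) with hNdef
  set L : (Fin n → ℤ) → ℝ :=
    fun x => ∑ i : Fin n, (x i : ℝ) * (sgn (dDeriv p i x) : ℝ) with hL
  set cr : Fin n → Fin n → ℝ := fun i j =>
    (∑ x ∈ S, (x i : ℝ) * (x j : ℝ) * (sgn (dDeriv p i x) : ℝ) * (sgn (dDeriv p j x) : ℝ)) / N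
    with hcr
  -- Step 1 : totalInf f = (Σ_x f x · L x)/N
  have h1 : totalInf f = (∑ x ∈ S, (f x : ℝ) * L x) / N := by
    unfold totalInf
    calc ∑ i : Fin n, coordInf f i
        = ∑ i : Fin n, (∑ x ∈ S, (f x : ℝ) * (x i : ℝ) * (sgn (dDeriv p i x) : ℝ)) / N :=
          Finset.sum_congr rfl fun i _ => coordInf_eq p hnz f hf i
      _ = (∑ i : Fin n, ∑ x ∈ S, (f x : ℝ) * (x i : ℝ) * (sgn (dDeriv p i x) : ℝ)) / N := by
          rw [Finset.sum_div]
      _ = (∑ x ∈ S, ∑ i : Fin n, (f x : ℝ) * (x i : ℝ) * (sgn (dDeriv p i x) : ℝ)) / N := by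
          rw [Finset.sum_comm]
      _ = (∑ x ∈ S, (f x : ℝ) * L x) / N := by
          congr 1
          exact Finset.sum_congr rfl fun x _ => by
            rw [hL, Finset.mul_sum]
            exact Finset.sum_congr rfl fun i _ => by ring
  -- Step 2 : totalInf f ≤ (Σ_x |L x|)/N
  have habs : ∀ x ∈ S, (f x : ℝ) * L x ≤ |L x| := by
    intro x hx
    have hfx := hf x hx
    rcases sgn_cases (hnz x hx) with ⟨h, _⟩ | ⟨h, _⟩ <;> rw [hfx, h]
    · push_cast; rw [one_mul]; exact le_abs_self _
    · push_cast; rw [neg_one_mul]; exact neg_le_abs _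
  have h2 : totalInf f ≤ (∑ x ∈ S, |L x|) / N := by
    rw [h1]
    exact (div_le_div_iff_of_pos_right hNpos).2 (Finset.sum_le_sum habs)
  -- Step 3 : Cauchy–Schwarz
  have hCS : ((∑ x ∈ S, |L x|) / N) ^ 2 ≤ (∑ x ∈ S, (L x) ^ 2) / N := by
    have hcs := sq_sum_le_card_mul_sum_sq (s := S) (f := fun x => |L x|)
    simp_rw [sq_abs] at hcs
    have h' : (∑ x ∈ S, |L x|) ^ 2 ≤ N * ∑ x ∈ S, (L x) ^ 2 := by exact_mod_cast hcs
    rw [div_pow, div_le_div_iff₀ (by positivity) hNpos]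
    nlinarith [mul_le_mul_of_nonneg_right h' (le_of_lt hNpos)]
  -- Step 4 : expand the square
  have hexp : ∑ x ∈ S, (L x) ^ 2
      = ∑ i : Fin n, ∑ j : Fin n, ∑ x ∈ S,
          ((x i : ℝ) * (sgn (dDeriv p i x) : ℝ)) * ((x j : ℝ) * (sgn (dDeriv p j x) : ℝ)) := by
    have : ∀ x, (L x) ^ 2 = ∑ i : Fin n, ∑ j : Fin n,
        ((x i : ℝ) * (sgn (dDeriv p i x) : ℝ)) * ((x j : ℝ) * (sgn (dDeriv p j x) : ℝ)) := by
      intro x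
      rw [hL, sq, Finset.sum_mul_sum]
    rw [Finset.sum_congr rfl fun x _ => this x, Finset.sum_comm]
    exact Finset.sum_congr rfl fun i _ => Finset.sum_comm
  have hdiag : ∀ i : Fin n,
      (∑ x ∈ S, ((x i : ℝ) * (sgn (dDeriv p i x) : ℝ))
        * ((x i : ℝ) * (sgn (dDeriv p i x) : ℝ))) / N ≤ 1 := by
    intro i
    rw [div_le_one hNpos]
    calc ∑ x ∈ S, ((x i : ℝ) * (sgn (dDeriv p i x) : ℝ)) * ((x i : ℝ) * (sgn (dDeriv p i x) : ℝ))
        ≤ ∑ x ∈ S, 1 := by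
          apply Finset.sum_le_sum
          intro x hx
          have hxi : ((x i : ℝ)) ^ 2 = 1 := by
            rcases mem_cube_iff.1 hx i with h | h <;> rw [h] <;> norm_num
          have hs := sgn_sq_le_one (dDeriv p i x)
          have hq : ((x i : ℝ) * (sgn (dDeriv p i x) : ℝ)) * ((x i : ℝ) * (sgn (dDeriv p i x) : ℝ))
              = ((x i : ℝ)) ^ 2 * ((sgn (dDeriv p i x) : ℝ)) ^ 2 := by ring
          rw [hq, hxi, one_mul]
          exact hs
      _ = N := by simp [hNdef]
  have h4 : (∑ x ∈ S, (L x) ^ 2) / N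
      ≤ (n : ℝ) + ∑ i : Fin n, ∑ j : Fin n, (if i ≠ j then cr i j else 0) := by
    have hsplit : (n : ℝ) + ∑ i : Fin n, ∑ j : Fin n, (if i ≠ j then cr i j else 0)
        = ∑ i : Fin n, ∑ j : Fin n, (if i = j then (1:ℝ) else cr i j) := by
      have e1 : ∀ i j : Fin n, (if i = j then (1:ℝ) else cr i j)
          = (if i = j then (1:ℝ) else 0) + (if i ≠ j then cr i j else 0) := by
        intro i j; split_ifs with h h' h' <;> simp_all
      have hdiagcount : ∑ i : Fin n, ∑ j : Fin n, (if i = j then (1:ℝ) else 0) = n := by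
        simp
      have hsum2 : ∑ i : Fin n, ∑ j : Fin n,
            ((if i = j then (1:ℝ) else 0) + (if i ≠ j then cr i j else 0))
          = (∑ i : Fin n, ∑ j : Fin n, (if i = j then (1:ℝ) else 0))
            + ∑ i : Fin n, ∑ j : Fin n, (if i ≠ j then cr i j else 0) := by
        rw [← Finset.sum_add_distrib]
        exact Finset.sum_congr rfl fun i _ => Finset.sum_add_distrib
      simp_rw [e1]
      rw [hsum2, hdiagcount]
    rw [hexp, hsplit]
    rw [Finset.sum_div]
    apply Finset.sum_le_sum
    intro i _
    rw [Finset.sum_div]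
    apply Finset.sum_le_sum
    intro j _
    rcases eq_or_ne i j with h | h
    · subst h
      rw [if_pos rfl]
      exact hdiag i
    · rw [if_neg h, hcr]
      apply le_of_eq
      congr 1
      exact Finset.sum_congr rfl fun x _ => by ring
  -- conclusion
  have hle : (∑ x ∈ S, |L x|) / N ≤ Real.sqrt ((n : ℝ) +
      ∑ i : Fin n, ∑ j : Fin n, (if i ≠ j then cr i j else 0)) := by
    apply Real.le_sqrt_of_sq_le
    exact le_trans hCS h4
  exact le_trans h2 hle
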